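/- If P ≠ Q are density matrices on C^d, then qW(P,Q) > 0, where qW(P,Q) := min over couplings π of Tr(π C) with C = (I - SWAP)/2. Equivalently, qW(P,Q) = 0 implies P = Q. -/

import Mathlib

open Matrix ComplexOrder

/-- The SWAP operator on `ℂ^d ⊗ ℂ^d`: `SWAP (x ⊗ y) = y ⊗ x`. -/
def swapMat (d : ℕ) : Matrix (Fin d × Fin d) (Fin d × Fin d) ℂ :=
  fun p q => if p.1 = q.2 ∧ p.2 = q.1 then 1 else 0

/-- `C = (I - SWAP)/2`. -/
noncomputable def Cmat (d : ℕ) : Matrix (Fin d × Fin d) (Fin d × Fin d) ℂ :=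
  (1/2 : ℂ) • (1 - swapMat d)

/-- Partial trace over the second tensor factor. -/
noncomputable def ptrace2 {d : ℕ} (π : Matrix (Fin d × Fin d) (Fin d × Fin d) ℂ) :
    Matrix (Fin d) (Fin d) ℂ := fun i k => ∑ j, π (i, j) (k, j)

/-- Partial trace over the first tensor factor. -/
noncomputable def ptrace1 {d : ℕ} (π : Matrix (Fin d × Fin d) (Fin d × Fin d) ℂ) :
    Matrix (Fin d) (Fin d) ℂ := fun j l => ∑ i, π (i, j) (i, l)

/-- A density matrix: positive semidefinite (hence Hermitian) with trace 1. -/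
def IsDensity {n : Type*} [Fintype n] (ρ : Matrix n n ℂ) : Prop :=
  ρ.PosSemidef ∧ ρ.trace = 1


/-- A coupling of `(P, Q)`: a density matrix on the product space with marginals `P` and `Q`. -/
def IsCoupling {d : ℕ} (π : Matrix (Fin d × Fin d) (Fin d × Fin d) ℂ)
    (P Q : Matrix (Fin d) (Fin d) ℂ) : Prop :=
  IsDensity π ∧ ptrace2 π = P ∧ ptrace1 π = Q

/-- The quantum Wasserstein semimetric: the optimal value of `Tr(π C)` over couplings. -/
noncomputable def qW {d : ℕ} (P Q : Matrix (Fin d) (Fin d) ℂ) : ℝ :=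
  sInf {x : ℝ | ∃ π, IsCoupling π P Q ∧ (π * Cmat d).trace = (x : ℂ)}

/-!
Write a coupling `π` as the Gram matrix of vectors `v (a, b)`. Then
`Tr(π C) = ¼ ∑ ‖v (a, b) - v (b, a)‖²`, while
`(P - Q) i k = ∑ j, ⟪v (i, j) - v (j, i), v (k, j)⟫ + ⟪v (j, i), v (k, j) - v (j, k)⟫`,
so Cauchy–Schwarz and `Tr π = 1` give `‖P i k - Q i k‖² ≤ 16 Tr(π C)` for every coupling.
The set of couplings contains `P ⊗ Q`, so this bound passes to the infimum `qW P Q`.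
-/

open scoped InnerProductSpace Kronecker

theorem Matrix.PosSemidef.exists_eq_gram {𝕜 n : Type*} [RCLike 𝕜] [Fintype n]
    {A : Matrix n n 𝕜} (hA : A.PosSemidef) : ∃ v : n → EuclideanSpace 𝕜 n, A = gram 𝕜 v := by
  classical
  open scoped MatrixOrder Matrix.Norms.L2Operator in
  obtain ⟨B, rfl⟩ := CStarAlgebra.nonneg_iff_eq_star_mul_self.mp hA.nonneg
  refine ⟨fun p => WithLp.toLp 2 (fun r => B r p), ?_⟩
  ext p q
  simp [gram_apply, mul_apply, star_eq_conjTranspose, EuclideanSpace.inner_eq_star_dotProduct,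
    dotProduct, mul_comm]

theorem norm_sum_inner_sq_le {𝕜 E ι : Type*} [RCLike 𝕜] [NormedAddCommGroup E]
    [InnerProductSpace 𝕜 E] [Fintype ι] (a b : ι → E) :
    ‖∑ j, ⟪a j, b j⟫_𝕜‖ ^ 2 ≤ (∑ j, ‖a j‖ ^ 2) * ∑ j, ‖b j‖ ^ 2 := by
  calc ‖∑ j, ⟪a j, b j⟫_𝕜‖ ^ 2 ≤ (∑ j, ‖a j‖ * ‖b j‖) ^ 2 := by
        gcongr
        exact (norm_sum_le _ _).trans (Finset.sum_le_sum fun j _ => norm_inner_le_norm _ _)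
    _ ≤ _ := Finset.sum_mul_sq_le_sq_mul_sq _ _ _

theorem Fintype.sum_apply_left_le_sum {α β : Type*} [Fintype α] [Fintype β] {f : α × β → ℝ}
    (hf : ∀ p, 0 ≤ f p) (a : α) : ∑ b, f (a, b) ≤ ∑ p, f p := by
  rw [Fintype.sum_prod_type]
  exact Finset.single_le_sum (f := fun a => ∑ b, f (a, b))
    (fun a _ => Finset.sum_nonneg fun b _ => hf _) (Finset.mem_univ a)

theorem Fintype.sum_apply_right_le_sum {α β : Type*} [Fintype α] [Fintype β] {f : α × β → ℝ}
    (hf : ∀ p, 0 ≤ f p) (b : β) : ∑ a, f (a, b) ≤ ∑ p, f p := by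
  rw [Fintype.sum_prod_type_right]
  exact Finset.single_le_sum (f := fun b => ∑ a, f (a, b))
    (fun b _ => Finset.sum_nonneg fun a _ => hf _) (Finset.mem_univ b)

theorem Matrix.trace_gram {𝕜 E n : Type*} [RCLike 𝕜] [NormedAddCommGroup E]
    [InnerProductSpace 𝕜 E] [Fintype n] (v : n → E) :
    (gram 𝕜 v).trace = ((∑ i, ‖v i‖ ^ 2 : ℝ) : 𝕜) := by
  simp [trace, gram_apply, inner_self_eq_norm_sq_to_K]

section Coupling

variable {d : ℕ}

theorem trace_mul_swapMat (π : Matrix (Fin d × Fin d) (Fin d × Fin d) ℂ) :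
    (π * swapMat d).trace = ∑ p, π p p.swap := by
  refine Finset.sum_congr rfl fun p _ => ?_
  rw [diag_apply, mul_apply, Finset.sum_eq_single p.swap]
  · simp [swapMat]
  · rintro q - hq
    simp only [swapMat, mul_ite, mul_one, mul_zero, ite_eq_right_iff]
    rintro ⟨h1, h2⟩
    exact absurd (Prod.ext h1 h2) hq
  · simp

theorem trace_mul_Cmat (π : Matrix (Fin d × Fin d) (Fin d × Fin d) ℂ) :
    (π * Cmat d).trace = (∑ p, (π p p - π p p.swap)) / 2 := by
  rw [Cmat, Matrix.mul_smul, trace_smul, Matrix.mul_sub, trace_sub, mul_one,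
    trace_mul_swapMat, Finset.sum_sub_distrib, smul_eq_mul]
  simp only [trace, diag_apply]
  ring

section Gram

variable {E : Type*} [NormedAddCommGroup E] [InnerProductSpace ℂ E]

theorem trace_gram_mul_Cmat (v : Fin d × Fin d → E) :
    (gram ℂ v * Cmat d).trace = ((∑ p, ‖v p - v p.swap‖ ^ 2 : ℝ) : ℂ) / 4 := by
  have hswap : ∀ f : Fin d × Fin d → ℂ, ∑ p : Fin d × Fin d, f p.swap = ∑ p, f p :=
    fun f => Fintype.sum_equiv (Equiv.prodComm _ _) _ _ fun _ => rfl
  have h1 : ∑ p : Fin d × Fin d, ⟪v p.swap, v p⟫_ℂ = ∑ p, ⟪v p, v p.swap⟫_ℂ := by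
    simpa using hswap fun p => ⟪v p, v p.swap⟫_ℂ
  have h2 : ∑ p : Fin d × Fin d, ⟪v p.swap, v p.swap⟫_ℂ = ∑ p, ⟪v p, v p⟫_ℂ :=
    hswap fun p => ⟪v p, v p⟫_ℂ
  calc (gram ℂ v * Cmat d).trace = (∑ p, ⟪v p, v p⟫_ℂ - ∑ p, ⟪v p, v p.swap⟫_ℂ) / 2 := by
        simp only [trace_mul_Cmat, gram_apply, Finset.sum_sub_distrib]
    _ = (∑ p, ⟪v p - v p.swap, v p - v p.swap⟫_ℂ) / 4 := by
        simp only [inner_sub_sub_self, Finset.sum_add_distrib, Finset.sum_sub_distrib, h1, h2]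
        ring
    _ = _ := by simp [inner_self_eq_norm_sq_to_K]

theorem ptrace2_gram_sub_ptrace1_gram (v : Fin d × Fin d → E) (i k : Fin d) :
    ptrace2 (gram ℂ v) i k - ptrace1 (gram ℂ v) i k
      = ∑ j, (⟪v (i, j) - v (j, i), v (k, j)⟫_ℂ + ⟪v (j, i), v (k, j) - v (j, k)⟫_ℂ) := by
  simp only [ptrace2, ptrace1, gram_apply, inner_sub_left, inner_sub_right,
    ← Finset.sum_sub_distrib]
  exact Finset.sum_congr rfl fun j _ => by ring

theorem norm_ptrace2_gram_sub_ptrace1_gram_sq_le (v : Fin d × Fin d → E) (i k : Fin d) :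
    ‖ptrace2 (gram ℂ v) i k - ptrace1 (gram ℂ v) i k‖ ^ 2
      ≤ 4 * (∑ p, ‖v p‖ ^ 2) * ∑ p, ‖v p - v p.swap‖ ^ 2 := by
  set N := ∑ p, ‖v p‖ ^ 2
  set D := ∑ p, ‖v p - v p.swap‖ ^ 2
  have hD : ∀ a, ∑ j, ‖v (a, j) - v (j, a)‖ ^ 2 ≤ D := fun a =>
    Fintype.sum_apply_left_le_sum (f := fun p => ‖v p - v p.swap‖ ^ 2) (fun _ => by positivity) a
  have hN_row : ∀ a, ∑ j, ‖v (a, j)‖ ^ 2 ≤ N := fun a =>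
    Fintype.sum_apply_left_le_sum (f := fun p => ‖v p‖ ^ 2) (fun _ => by positivity) a
  have hN_col : ∀ a, ∑ j, ‖v (j, a)‖ ^ 2 ≤ N := fun a =>
    Fintype.sum_apply_right_le_sum (f := fun p => ‖v p‖ ^ 2) (fun _ => by positivity) a
  rw [ptrace2_gram_sub_ptrace1_gram, Finset.sum_add_distrib]
  set x := ∑ j, ⟪v (i, j) - v (j, i), v (k, j)⟫_ℂ
  set y := ∑ j, ⟪v (j, i), v (k, j) - v (j, k)⟫_ℂ
  have hx : ‖x‖ ^ 2 ≤ D * N :=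
    (norm_sum_inner_sq_le _ _).trans (mul_le_mul (hD i) (hN_row k) (by positivity) (by positivity))
  have hy : ‖y‖ ^ 2 ≤ N * D :=
    (norm_sum_inner_sq_le _ _).trans (mul_le_mul (hN_col i) (hD k) (by positivity) (by positivity))
  calc ‖x + y‖ ^ 2 ≤ (‖x‖ + ‖y‖) ^ 2 := by gcongr; exact norm_add_le x y
    _ ≤ 2 * (‖x‖ ^ 2 + ‖y‖ ^ 2) := add_sq_le
    _ ≤ 4 * N * D := by linarith

end Gram

theorem IsCoupling.norm_sub_apply_sq_le {π : Matrix (Fin d × Fin d) (Fin d × Fin d) ℂ}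
    {P Q : Matrix (Fin d) (Fin d) ℂ} (h : IsCoupling π P Q) (i k : Fin d) :
    ‖P i k - Q i k‖ ^ 2 ≤ 16 * (π * Cmat d).trace.re := by
  obtain ⟨⟨hpsd, htr⟩, rfl, rfl⟩ := h
  obtain ⟨v, rfl⟩ := hpsd.exists_eq_gram
  have hN : ∑ p, ‖v p‖ ^ 2 = 1 :=
    RCLike.ofReal_injective ((trace_gram v).symm.trans (htr.trans RCLike.ofReal_one.symm))
  have hC : (gram ℂ v * Cmat d).trace.re = (∑ p, ‖v p - v p.swap‖ ^ 2) / 4 := by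
    rw [trace_gram_mul_Cmat]; norm_cast
  have hbound := norm_ptrace2_gram_sub_ptrace1_gram_sq_le v i k
  rw [hN] at hbound
  rw [hC]
  linarith

theorem Matrix.PosSemidef.ofReal_re_trace_mul_Cmat
    {π : Matrix (Fin d × Fin d) (Fin d × Fin d) ℂ}
    (hπ : π.PosSemidef) : (((π * Cmat d).trace.re : ℝ) : ℂ) = (π * Cmat d).trace := by
  obtain ⟨v, rfl⟩ := hπ.exists_eq_gram
  rw [trace_gram_mul_Cmat]
  norm_cast

theorem IsDensity.isCoupling_kronecker {P Q : Matrix (Fin d) (Fin d) ℂ} (hP : IsDensity P)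
    (hQ : IsDensity Q) : IsCoupling (P ⊗ₖ Q) P Q := by
  have hPt : ∑ i, P i i = 1 := hP.2
  have hQt : ∑ j, Q j j = 1 := hQ.2
  refine ⟨⟨hP.1.kronecker hQ.1, by rw [trace_kronecker, hP.2, hQ.2, one_mul]⟩, ?_, ?_⟩
  · ext i k
    simp [ptrace2, ← Finset.mul_sum, hQt]
  · ext j l
    simp [ptrace1, ← Finset.sum_mul, hPt]

end Coupling

/-- If `P ≠ Q` then `qW(P, Q) > 0`; equivalently `qW(P, Q) = 0` implies `P = Q`. -/
theorem qW_eq_zero_iff (d : ℕ) (P Q : Matrix (Fin d) (Fin d) ℂ)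
    (hP : IsDensity P) (hQ : IsDensity Q) (h : qW P Q = 0) : P = Q := by
  have hne : {x : ℝ | ∃ π, IsCoupling π P Q ∧ (π * Cmat d).trace = (x : ℂ)}.Nonempty :=
    ⟨_, P ⊗ₖ Q, hP.isCoupling_kronecker hQ, (hP.1.kronecker hQ.1).ofReal_re_trace_mul_Cmat.symm⟩
  ext i k
  have hle : ‖P i k - Q i k‖ ^ 2 / 16 ≤ qW P Q := le_csInf hne fun x ⟨π, hπ, hx⟩ => by
    have := hπ.norm_sub_apply_sq_le i k
    rw [hx, Complex.ofReal_re] at this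
    linarith
  rw [h] at hle
  have hnorm : ‖P i k - Q i k‖ = 0 := by nlinarith [norm_nonneg (P i k - Q i k)]
  exact sub_eq_zero.mp (norm_eq_zero.mp hnorm)
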